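/- Let 𝕜 be an RCLike field (ℝ or ℂ), E a finite-dimensional inner product space over 𝕜, X : Fin n → Submodule 𝕜 E, and Z a submodule of E that commutes with each X i in the sense that X i = (X i ⊓ Z) ⊔ (X i ⊓ Zᗮ) for every i. Then for every quantum-logic term t in n variables, the Z-relative value satisfies evalRel Z t (fun i => X i ⊓ Z) = (eval t X) ⊓ Z. -/

import Mathlib

/-- A quantum-logic term in `n` variables. -/
inductive Term (n : ℕ) : Type
  | var : Fin n → Term n
  | neg : Term n → Term n
  | inf : Term n → Term n → Term n
  | sup : Term n → Term n → Term n

/-- The value of a quantum-logic term under an assignment of subspaces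
to the variables.  Negation is interpreted as orthogonal complement. -/
def Term.eval {n : ℕ} {𝕜 E : Type*} [RCLike 𝕜] [NormedAddCommGroup E]
    [InnerProductSpace 𝕜 E] : Term n → (Fin n → Submodule 𝕜 E) → Submodule 𝕜 E
  | .var i, U => U i
  | .neg t, U => (t.eval U)ᗮ
  | .inf s t, U => s.eval U ⊓ t.eval U
  | .sup s t, U => s.eval U ⊔ t.eval U

/-- The `Z`-relative value of a quantum-logic term: negation is interpreted
inside `Z`, i.e. as `Z ⊓ ·ᗮ`. -/
def Term.evalRel {n : ℕ} {𝕜 E : Type*} [RCLike 𝕜] [NormedAddCommGroup E]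
    [InnerProductSpace 𝕜 E] (Z : Submodule 𝕜 E) :
    Term n → (Fin n → Submodule 𝕜 E) → Submodule 𝕜 E
  | .var i, U => U i
  | .neg t, U => Z ⊓ (t.evalRel Z U)ᗮ
  | .inf s t, U => s.evalRel Z U ⊓ t.evalRel Z U
  | .sup s t, U => s.evalRel Z U ⊔ t.evalRel Z U

/-!
Commuting with `Z` means precisely that `W` is invariant under the orthogonal projection `P` onto
`Z`. Invariance under the self-adjoint `P` is preserved by `ᗮ`, `⊓` and `⊔`, so every subterm
evaluates to an invariant subspace. For invariant `W` we have `W ⊓ Z = P W`, so `· ⊓ Z` commutes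
with `⊔` (images commute with sups), and `Z ⊓ (W ⊓ Z)ᗮ = Wᗮ ⊓ Z` because `P` is self-adjoint
and fixes `Z`.
-/

open Module.End
open scoped InnerProductSpace

namespace Submodule

variable {𝕜 E : Type*} [RCLike 𝕜] [NormedAddCommGroup E] [InnerProductSpace 𝕜 E]
  (Z : Submodule 𝕜 E) [Z.HasOrthogonalProjection] {W : Submodule 𝕜 E}

theorem mem_invtSubmodule_starProjection_of_eq_sup (hW : W = W ⊓ Z ⊔ W ⊓ Zᗮ) :
    W ∈ invtSubmodule (Z.starProjection : E →ₗ[𝕜] E) := by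
  intro w hw
  rw [hW] at hw
  obtain ⟨a, ha, b, hb, rfl⟩ := mem_sup.mp hw
  have hPa : Z.starProjection a = a := starProjection_eq_self_iff.mpr ha.2
  have hPb : Z.starProjection b = 0 := Z.starProjection_apply_eq_zero_iff.mpr hb.2
  simpa [hPa, hPb] using ha.1

variable {Z}

theorem inf_eq_map_starProjection (hW : W ∈ invtSubmodule (Z.starProjection : E →ₗ[𝕜] E)) :
    W ⊓ Z = W.map (Z.starProjection : E →ₗ[𝕜] E) := by
  apply le_antisymm
  · rintro x ⟨hxW, hxZ⟩
    exact ⟨x, hxW, starProjection_eq_self_iff.mpr hxZ⟩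
  · rintro _ ⟨w, hw, rfl⟩
    exact ⟨hW hw, Z.starProjection_apply_mem w⟩

theorem inf_orthogonal_inf_eq_orthogonal_inf
    (hW : W ∈ invtSubmodule (Z.starProjection : E →ₗ[𝕜] E)) :
    Z ⊓ (W ⊓ Z)ᗮ = Wᗮ ⊓ Z := by
  refine le_antisymm ?_ fun x hx ↦ ⟨hx.2, orthogonal_le inf_le_left hx.1⟩
  rintro x ⟨hxZ, hx⟩
  refine ⟨fun w hw ↦ ?_, hxZ⟩
  calc ⟪w, x⟫_𝕜 = ⟪w, Z.starProjection x⟫_𝕜 := by rw [starProjection_eq_self_iff.mpr hxZ]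
    _ = ⟪Z.starProjection w, x⟫_𝕜 := (Z.inner_starProjection_left_eq_right w x).symm
    _ = 0 := hx _ ⟨hW hw, Z.starProjection_apply_mem w⟩

end Submodule

namespace Term

variable {n : ℕ} {𝕜 E : Type*} [RCLike 𝕜] [NormedAddCommGroup E] [InnerProductSpace 𝕜 E]
  {X : Fin n → Submodule 𝕜 E}

theorem eval_mem_invtSubmodule {T : Module.End 𝕜 E} (hT : T.IsSymmetric)
    (hX : ∀ i, X i ∈ invtSubmodule T) (t : Term n) : t.eval X ∈ invtSubmodule T := by
  induction t with
  | var i => exact hX i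
  | neg t ih => exact hT.orthogonalComplement_mem_invtSubmodule ih
  | inf s t ihs iht => exact invtSubmodule.inf_mem ihs iht
  | sup s t ihs iht => exact invtSubmodule.sup_mem ihs iht

theorem evalRel_inf_eq_eval_inf (Z : Submodule 𝕜 E) [Z.HasOrthogonalProjection]
    (hX : ∀ i, X i ∈ invtSubmodule (Z.starProjection : E →ₗ[𝕜] E)) (t : Term n) :
    t.evalRel Z (fun i => X i ⊓ Z) = t.eval X ⊓ Z := by
  have hinv (s : Term n) := eval_mem_invtSubmodule Z.starProjection_isSymmetric hX s
  induction t with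
  | var i => rfl
  | neg t ih =>
    rw [evalRel, eval, ih, Submodule.inf_orthogonal_inf_eq_orthogonal_inf (hinv t)]
  | inf s t ihs iht =>
    rw [evalRel, eval, ihs, iht]
    exact (inf_inf_distrib_right _ _ _).symm
  | sup s t ihs iht =>
    rw [evalRel, ihs, iht, Submodule.inf_eq_map_starProjection (hinv s),
      Submodule.inf_eq_map_starProjection (hinv t), ← Submodule.map_sup]
    exact (Submodule.inf_eq_map_starProjection (hinv (s.sup t))).symm

end Term

theorem evalRel_inf_commuting {n : ℕ} {𝕜 E : Type*} [RCLike 𝕜]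
    [NormedAddCommGroup E] [InnerProductSpace 𝕜 E] [FiniteDimensional 𝕜 E]
    (X : Fin n → Submodule 𝕜 E) (Z : Submodule 𝕜 E)
    (hcomm : ∀ i, X i = (X i ⊓ Z) ⊔ (X i ⊓ Zᗮ)) (t : Term n) :
    t.evalRel Z (fun i => X i ⊓ Z) = t.eval X ⊓ Z :=
  t.evalRel_inf_eq_eval_inf Z fun i ↦ Z.mem_invtSubmodule_starProjection_of_eq_sup (hcomm i)
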